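/- arXiv:2503.05172 — 4 statements merged into one kernel-verified Lean document; each statement's English description precedes it below -/
import Mathlib

section
/- For complex numbers α₁₂, α₁₃, α₂₃ with |α₁₂|² + |α₁₃|² + |α₂₃|² = 1, the quantity √((1 + |α₁₃² − 2α₁₂α₂₃|²)/2) lies in the interval [1/2, 1]. -/
theorem norm_sq_sub_two_mul_le {R : Type*} [SeminormedRing R] [NormOneClass R] (a b c : R) :
    ‖c ^ 2 - 2 * a * b‖ ≤ ‖a‖ ^ 2 + ‖b‖ ^ 2 + ‖c‖ ^ 2 := by
  have h_two : ‖(2 : R)‖ ≤ 2 := by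
    simpa [one_add_one_eq_two] using norm_add_le (1 : R) 1
  have h_prod : ‖2 * a * b‖ ≤ 2 * (‖a‖ * ‖b‖) :=
    calc ‖2 * a * b‖ ≤ ‖(2 : R)‖ * ‖a‖ * ‖b‖ := norm_mul₃_le
      _ ≤ 2 * (‖a‖ * ‖b‖) := by rw [mul_assoc]; gcongr
  calc ‖c ^ 2 - 2 * a * b‖ ≤ ‖c ^ 2‖ + ‖2 * a * b‖ := norm_sub_le _ _
    _ ≤ ‖c‖ ^ 2 + 2 * (‖a‖ * ‖b‖) := add_le_add (norm_pow_le c 2) h_prod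
    _ ≤ ‖a‖ ^ 2 + ‖b‖ ^ 2 + ‖c‖ ^ 2 := by nlinarith [sq_nonneg (‖a‖ - ‖b‖)]

theorem sqrt_one_add_sq_div_two_mem_Icc {K : ℝ} (hK : |K| ≤ 1) :
    Real.sqrt ((1 + K ^ 2) / 2) ∈ Set.Icc (1 / 2 : ℝ) 1 := by
  have hK_sq : K ^ 2 ≤ 1 := (sq_le_one_iff_abs_le_one K).mpr hK
  constructor
  · rw [Real.le_sqrt (by norm_num) (by positivity)]
    nlinarith [sq_nonneg K]
  · rw [Real.sqrt_le_one]
    linarith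

theorem antisym_chsh_parameter_range (a12 a13 a23 : ℂ)
    (h : ‖a12‖ ^ 2 + ‖a13‖ ^ 2 + ‖a23‖ ^ 2 = 1) :
    Real.sqrt ((1 + ‖a13 ^ 2 - 2 * a12 * a23‖ ^ 2) / 2) ∈
      Set.Icc (1 / 2 : ℝ) 1 := by
  apply sqrt_one_add_sq_div_two_mem_Icc
  rw [abs_norm]
  calc ‖a13 ^ 2 - 2 * a12 * a23‖ ≤ ‖a12‖ ^ 2 + ‖a23‖ ^ 2 + ‖a13‖ ^ 2 :=
        norm_sq_sub_two_mul_le a12 a23 a13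
    _ = 1 := by linarith
end

section
/- For complex numbers α₁₁, α₂₂, α₃₃ with |α₁₁|² + |α₂₂|² + |α₃₃|² = 1, one has |conj(α₁₁)·α₂₂ + conj(α₂₂)·α₃₃|² + (|α₁₁|² + |α₃₃|²)² ≤ 1 − |α₂₂|⁴ ≤ 1. -/
/-!
Writing `x, y, z` for `‖α₁₁‖, ‖α₂₂‖, ‖α₃₃‖`, the triangle inequality bounds the first norm by
`y (x + z)`, and `(x + z)² ≤ 2 (x² + z²)`. With `s = x² + z² = 1 - y²` the left-hand side is then
at most `2 y² s + s² = (s + y²)² - y⁴ = 1 - y⁴`.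
-/

theorem norm_star_mul_add_star_mul_le {E : Type*} [NonUnitalSeminormedRing E] [StarRing E]
    [NormedStarGroup E] (a b c : E) :
    ‖star a * b + star b * c‖ ≤ ‖b‖ * (‖a‖ + ‖c‖) :=
  calc ‖star a * b + star b * c‖ ≤ ‖star a * b‖ + ‖star b * c‖ := norm_add_le _ _
    _ ≤ ‖star a‖ * ‖b‖ + ‖star b‖ * ‖c‖ := add_le_add (norm_mul_le _ _) (norm_mul_le _ _)
    _ = ‖b‖ * (‖a‖ + ‖c‖) := by rw [norm_star, norm_star]; ring

theorem sq_mul_add_add_sq_le_one_sub_pow_four {x y z : ℝ} (h : x ^ 2 + y ^ 2 + z ^ 2 = 1) :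
    (y * (x + z)) ^ 2 + (x ^ 2 + z ^ 2) ^ 2 ≤ 1 - y ^ 4 :=
  calc (y * (x + z)) ^ 2 + (x ^ 2 + z ^ 2) ^ 2
      = y ^ 2 * (x + z) ^ 2 + (x ^ 2 + z ^ 2) ^ 2 := by ring
    _ ≤ y ^ 2 * (2 * (x ^ 2 + z ^ 2)) + (x ^ 2 + z ^ 2) ^ 2 := by gcongr; exact add_sq_le
    _ = 1 - y ^ 4 := by linear_combination (x ^ 2 + y ^ 2 + z ^ 2 + 1) * h

theorem sym_chsh_bound_case2 (a11 a22 a33 : ℂ)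
    (h : ‖a11‖ ^ 2 + ‖a22‖ ^ 2 + ‖a33‖ ^ 2 = 1) :
    ‖(starRingEnd ℂ) a11 * a22 + (starRingEnd ℂ) a22 * a33‖ ^ 2 +
      (‖a11‖ ^ 2 + ‖a33‖ ^ 2) ^ 2 ≤ 1 - ‖a22‖ ^ 4 ∧
    1 - ‖a22‖ ^ 4 ≤ 1 := by
  refine ⟨?_, sub_le_self _ (by positivity)⟩
  calc ‖(starRingEnd ℂ) a11 * a22 + (starRingEnd ℂ) a22 * a33‖ ^ 2 +
        (‖a11‖ ^ 2 + ‖a33‖ ^ 2) ^ 2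
      ≤ (‖a22‖ * (‖a11‖ + ‖a33‖)) ^ 2 + (‖a11‖ ^ 2 + ‖a33‖ ^ 2) ^ 2 := by
        gcongr
        exact norm_star_mul_add_star_mul_le a11 a22 a33
    _ ≤ 1 - ‖a22‖ ^ 4 := sq_mul_add_add_sq_le_one_sub_pow_four h
end

section
/- Let ψ ∈ ℂ³ ⊗ ℂ³ be the antisymmetric unit vector with coefficients α₁₂, α₁₃, α₂₃ (so |α₁₂|² + |α₁₃|² + |α₂₃|² = 1) in the basis {(|12⟩−|21⟩)/√2, (|13⟩−|31⟩)/√2, (|23⟩−|32⟩)/√2}. Then the reduced density matrix ρ₁ (partial trace of |ψ⟩⟨ψ| over the second factor) satisfies tr(ρ₁²) = 1/2. -/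
/-- Coefficient matrix of the antisymmetric two-qutrit vector
`ψ = α₁₂(|12⟩−|21⟩)/√2 + α₁₃(|13⟩−|31⟩)/√2 + α₂₃(|23⟩−|32⟩)/√2`:
entry `(i, j)` is the coefficient of `|i⟩ ⊗ |j⟩`. -/
noncomputable def asymCoeff (a12 a13 a23 : ℂ) : Matrix (Fin 3) (Fin 3) ℂ :=
  (Real.sqrt 2 : ℂ)⁻¹ • !![0, a12, a13; -a12, 0, a23; -a13, -a23, 0]

/-- Reduced density matrix on the first factor: `ρ₁ i i' = ∑ j, ψ i j * conj (ψ i' j)`. -/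
noncomputable def reducedState (ψ : Matrix (Fin 3) (Fin 3) ℂ) : Matrix (Fin 3) (Fin 3) ℂ :=
  fun i i' => ∑ j, ψ i j * (starRingEnd ℂ) (ψ i' j)

/-!
The coefficient matrix of `ψ` is `2^{-1/2}` times the cross-product matrix `[a]ₓ` of
`a = (-α₂₃, α₁₃, -α₁₂)`, and `ρ₁ = ψ ψᴴ`. With `s = ‖a‖²` one has `[a]ₓ [a]ₓᴴ = s • 1 - conj a aᵀ`,
whose square has trace `3s² - 2s² + s² = 2s²`; the factor `1/4` from the normalisation gives
`tr ρ₁² = s² / 2`.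
-/

open Matrix

theorem reducedState_eq_mul_conjTranspose (ψ : Matrix (Fin 3) (Fin 3) ℂ) :
    reducedState ψ = ψ * ψᴴ := by
  ext i i'
  simp [reducedState, Matrix.mul_apply]

theorem reducedState_smul (c : ℂ) (ψ : Matrix (Fin 3) (Fin 3) ℂ) :
    reducedState (c • ψ) = (‖c‖ ^ 2 : ℂ) • reducedState ψ := by
  rw [reducedState_eq_mul_conjTranspose, reducedState_eq_mul_conjTranspose, conjTranspose_smul,
    Matrix.smul_mul, Matrix.mul_smul, smul_smul, RCLike.star_def, Complex.mul_conj']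

def skewMatrix (a12 a13 a23 : ℂ) : Matrix (Fin 3) (Fin 3) ℂ :=
  !![0, a12, a13; -a12, 0, a23; -a13, -a23, 0]

theorem asymCoeff_eq_smul_skewMatrix (a12 a13 a23 : ℂ) :
    asymCoeff a12 a13 a23 = (Real.sqrt 2 : ℂ)⁻¹ • skewMatrix a12 a13 a23 := rfl

theorem trace_reducedState_skewMatrix_mul_self (a12 a13 a23 : ℂ) :
    (reducedState (skewMatrix a12 a13 a23) * reducedState (skewMatrix a12 a13 a23)).trace
      = 2 * (‖a12‖ ^ 2 + ‖a13‖ ^ 2 + ‖a23‖ ^ 2 : ℂ) ^ 2 := by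
  rw [← Complex.mul_conj' a12, ← Complex.mul_conj' a13, ← Complex.mul_conj' a23]
  simp [reducedState, skewMatrix, Matrix.trace, Matrix.mul_apply, Fin.sum_univ_three]
  ring

theorem norm_inv_sqrt_two_sq : (‖(Real.sqrt 2 : ℂ)⁻¹‖ ^ 2 : ℂ) = 2⁻¹ := by
  rw [norm_inv, Complex.norm_real, Real.norm_of_nonneg (Real.sqrt_nonneg _), Complex.ofReal_inv,
    inv_pow, ← Complex.ofReal_pow, Real.sq_sqrt zero_le_two, Complex.ofReal_ofNat]

theorem trace_reducedState_asymCoeff_mul_self (a12 a13 a23 : ℂ) :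
    (reducedState (asymCoeff a12 a13 a23) * reducedState (asymCoeff a12 a13 a23)).trace
      = (‖a12‖ ^ 2 + ‖a13‖ ^ 2 + ‖a23‖ ^ 2 : ℂ) ^ 2 / 2 := by
  rw [asymCoeff_eq_smul_skewMatrix, reducedState_smul, norm_inv_sqrt_two_sq, Matrix.smul_mul,
    Matrix.mul_smul, smul_smul, trace_smul, trace_reducedState_skewMatrix_mul_self, smul_eq_mul]
  ring

theorem asym_reduced_purity (a12 a13 a23 : ℂ)
    (h : ‖a12‖ ^ 2 + ‖a13‖ ^ 2 + ‖a23‖ ^ 2 = 1) :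
    (reducedState (asymCoeff a12 a13 a23) * reducedState (asymCoeff a12 a13 a23)).trace
      = 1 / 2 := by
  have hc : (‖a12‖ ^ 2 + ‖a13‖ ^ 2 + ‖a23‖ ^ 2 : ℂ) = 1 := mod_cast h
  rw [trace_reducedState_asymCoeff_mul_self, hc, one_pow]
end

section
/- Let ψ ∈ ℂ³ ⊗ ℂ³ be the antisymmetric state with normalized coefficients α₁₂, α₁₃, α₂₃. Then the concurrence C(ψ) = √(2·(1 − tr(ρ₁²))) equals 1, where ρ₁ is the reduced state; in particular every such state is entangled. -/
open Matrix

section SkewSymmetric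

variable {R : Type*} [CommRing R]

/-- The matrix of `x ↦ x ×₃ ![c, -b, a]`. -/
def skewSymm3 (a b c : R) : Matrix (Fin 3) (Fin 3) R :=
  !![0, a, b; -a, 0, c; -b, -c, 0]

theorem skewSymm3_mul_skewSymm3 (a b c a' b' c' : R) :
    skewSymm3 a b c * skewSymm3 a' b' c' =
      vecMulVec ![c', -b', a'] ![c, -b, a] - (a * a' + b * b' + c * c') • 1 := by
  ext i j
  fin_cases i <;> fin_cases j <;> simp [skewSymm3, mul_apply, Fin.sum_univ_three] <;> ring

theorem skewSymm3_conjTranspose [StarRing R] (a b c : R) :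
    (skewSymm3 a b c)ᴴ = -skewSymm3 (star a) (star b) (star c) := by
  ext i j
  fin_cases i <;> fin_cases j <;> simp [skewSymm3]

end SkewSymmetric

theorem isIdempotentElem_vecMulVec {n R : Type*} [Fintype n] [Semiring R] {u v : n → R}
    (h : u ⬝ᵥ v = 1) : IsIdempotentElem (vecMulVec v u) := by
  rw [IsIdempotentElem, vecMulVec_mul_vecMulVec, h, one_smul]

theorem IsIdempotentElem.trace_half_one_sub_mul_self {n K : Type*} [Fintype n] [DecidableEq n]
    [Field K] {P : Matrix n n K} (hP : IsIdempotentElem P) :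
    ((2 : K)⁻¹ • (1 - P) * ((2 : K)⁻¹ • (1 - P))).trace =
      (4 : K)⁻¹ * (Fintype.card n - P.trace) := by
  rw [smul_mul_smul, ← mul_inv, hP.one_sub.eq, trace_smul, trace_sub, trace_one, smul_eq_mul]
  norm_num

theorem asymCoeff_eq_smul_skewSymm3 (a b c : ℂ) :
    asymCoeff a b c = (Real.sqrt 2 : ℂ)⁻¹ • skewSymm3 a b c :=
  rfl

theorem reducedState_asymCoeff (a b c : ℂ) :
    reducedState (asymCoeff a b c) = (2 : ℂ)⁻¹ •
      ((‖a‖ ^ 2 + ‖b‖ ^ 2 + ‖c‖ ^ 2 : ℂ) • 1 -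
        vecMulVec ![star c, -star b, star a] ![c, -b, a]) := by
  have hsqrt : (Real.sqrt 2 : ℂ)⁻¹ * star (Real.sqrt 2 : ℂ)⁻¹ = 2⁻¹ := by
    rw [star_inv₀, Complex.star_def, Complex.conj_ofReal, ← mul_inv, ← Complex.ofReal_mul,
      Real.mul_self_sqrt zero_le_two, Complex.ofReal_ofNat]
  have hnorm (z : ℂ) : z * star z = ‖z‖ ^ 2 := Complex.mul_conj' z
  rw [reducedState_eq_mul_conjTranspose, asymCoeff_eq_smul_skewSymm3, conjTranspose_smul,
    skewSymm3_conjTranspose, smul_mul_smul, mul_neg, skewSymm3_mul_skewSymm3, hsqrt,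
    hnorm, hnorm, hnorm, neg_sub]

theorem asym_concurrence_eq_one (a12 a13 a23 : ℂ)
    (h : ‖a12‖ ^ 2 + ‖a13‖ ^ 2 + ‖a23‖ ^ 2 = 1) :
    Real.sqrt (2 * (1 -
      (reducedState (asymCoeff a12 a13 a23) * reducedState (asymCoeff a12 a13 a23)).trace.re))
      = 1 := by
  have hsum : (‖a12‖ ^ 2 + ‖a13‖ ^ 2 + ‖a23‖ ^ 2 : ℂ) = 1 := by exact_mod_cast h
  have hunit : ![a23, -a13, a12] ⬝ᵥ ![star a23, -star a13, star a12] = 1 := by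
    simp only [dotProduct, Fin.sum_univ_three, cons_val, neg_mul_neg, Complex.star_def,
      Complex.mul_conj']
    linear_combination hsum
  have htrace :
      (reducedState (asymCoeff a12 a13 a23) * reducedState (asymCoeff a12 a13 a23)).trace
        = 1 / 2 := by
    rw [reducedState_asymCoeff, hsum, one_smul,
      (isIdempotentElem_vecMulVec hunit).trace_half_one_sub_mul_self, trace_vecMulVec,
      dotProduct_comm, hunit]
    norm_num
  rw [htrace]
  norm_num
end
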